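/- arXiv:0904.1153 — 2 statements merged into one kernel-verified Lean document; each statement's English description precedes it below -/
import Mathlib

section
/- Let h : ℝ → ℝ be Lipschitz with constant 1 (so its a.e. derivative satisfies ‖h'‖_∞ ≤ 1), and for 0 < t < 1 define h_t(x) = ∫ h(√t y + √(1−t) x) φ(y) dy with φ the standard normal density. Then h_t is twice differentiable and ‖h_t''‖_∞ ≤ 1/√t. -/
open MeasureTheory ProbabilityTheory Real Set Filter
open scoped NNReal ENNReal

namespace SmoothingAux

lemma integral_gaussianReal_eq (m : ℝ) (v : ℝ≥0) (hv : v ≠ 0) (f : ℝ → ℝ) :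
    ∫ z, f z ∂(gaussianReal m v) = ∫ z, gaussianPDFReal m v z * f z := by
  rw [gaussianReal_of_var_ne_zero m hv]
  have h1 : gaussianPDF m v = fun x => ((Real.toNNReal (gaussianPDFReal m v x) : ℝ≥0) : ℝ≥0∞) :=
    rfl
  rw [h1, integral_withDensity_eq_integral_smul
    ((measurable_gaussianPDFReal m v).real_toNNReal) f]
  congr 1
  ext z
  simp [NNReal.smul_def, Real.coe_toNNReal _ (gaussianPDFReal_nonneg m v z)]

lemma gaussian_map {t : ℝ} (ht : 0 < t) (m : ℝ) :
    (gaussianReal 0 1).map (fun y => Real.sqrt t * y + m) = gaussianReal m ⟨t, ht.le⟩ := by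
  have h1 : (fun y : ℝ => Real.sqrt t * y + m) = (· + m) ∘ (Real.sqrt t * ·) := rfl
  rw [h1, ← Measure.map_map (measurable_add_const m) (measurable_const_mul _),
    gaussianReal_map_const_mul, gaussianReal_map_add_const]
  congr 1
  · simp
  · ext
    simp [Real.sq_sqrt ht.le]
    rfl

lemma integral_comp_gaussian {t : ℝ} (ht : 0 < t) (m : ℝ) {f : ℝ → ℝ} (hf : Measurable f) :
    ∫ y, f (Real.sqrt t * y + m) ∂(gaussianReal 0 1)
      = ∫ z, gaussianPDFReal m ⟨t, ht.le⟩ z * f z := by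
  have hφ : Measurable fun y : ℝ => Real.sqrt t * y + m :=
    (measurable_id.const_mul _).add_const _
  have hv : (⟨t, ht.le⟩ : ℝ≥0) ≠ 0 := by
    intro hh
    exact ht.ne' (congrArg NNReal.toReal hh)
  rw [← integral_map hφ.aemeasurable hf.aestronglyMeasurable, gaussian_map ht m,
    integral_gaussianReal_eq m _ hv f]

lemma hasDerivAt_pdf (v : ℝ≥0) (hv : 0 < (v : ℝ)) (c z x : ℝ) :
    HasDerivAt (fun x => gaussianPDFReal (c * x) v z)
      (c * (z - c * x) / v * gaussianPDFReal (c * x) v z) x := by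
  simp only [gaussianPDFReal]
  have h1 : HasDerivAt (fun x : ℝ => z - c * x) (-c) x := by
    have := (hasDerivAt_const x z).sub ((hasDerivAt_id x).const_mul c)
    exact this.congr_deriv (by ring)
  have h2 := (h1.pow 2).neg.div_const (2 * (v : ℝ))
  have h3 := (h2.exp).const_mul (Real.sqrt (2 * π * v))⁻¹
  refine h3.congr_deriv ?_
  have hv' : (v : ℝ) ≠ 0 := hv.ne'
  simp only [Pi.neg_apply, Pi.pow_apply]
  field_simp
  ring

lemma integrable_abs_mul_pdf (m : ℝ) (v : ℝ≥0) (hv : 0 < (v : ℝ)) :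
    Integrable (fun z => |z - m| * gaussianPDFReal m v z) := by
  have h1 : Integrable (fun u : ℝ => |u| * rexp (-(2 * (v : ℝ))⁻¹ * u ^ 2)) := by
    have h := (integrable_mul_exp_neg_mul_sq (b := (2 * (v : ℝ))⁻¹) (by positivity)).abs
    refine h.congr ?_
    filter_upwards with u
    rw [abs_mul, abs_of_nonneg (exp_pos _).le]
  have h2 : Integrable (fun u : ℝ => |u| * gaussianPDFReal 0 v u) := by
    have := (h1.const_mul (Real.sqrt (2 * π * v))⁻¹)
    refine this.congr ?_
    filter_upwards with u
    simp only [gaussianPDFReal, sub_zero]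
    rw [neg_div, div_eq_inv_mul]
    ring
  have h3 := h2.comp_sub_right m
  refine h3.congr ?_
  filter_upwards with z
  rw [gaussianPDFReal_sub, zero_add]

lemma integral_Ioi_mul_exp (v : ℝ≥0) (hv : 0 < (v : ℝ)) :
    ∫ u in Ioi (0 : ℝ), u * rexp (-u ^ 2 / (2 * v)) = v := by
  have hderiv : ∀ x ∈ Ici (0 : ℝ),
      HasDerivAt (fun u : ℝ => -(v : ℝ) * rexp (-u ^ 2 / (2 * v)))
        (x * rexp (-x ^ 2 / (2 * v))) x := by
    intro x _
    have h1 : HasDerivAt (fun u : ℝ => -u ^ 2 / (2 * (v : ℝ)))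
        (-(2 * x) / (2 * v)) x := by
      simpa using ((hasDerivAt_pow 2 x).neg.div_const (2 * (v : ℝ)))
    have h2 := (h1.exp).const_mul (-(v : ℝ))
    refine h2.congr_deriv ?_
    have hv' : (v : ℝ) ≠ 0 := hv.ne'
    field_simp
  have hint : IntegrableOn (fun x : ℝ => x * rexp (-x ^ 2 / (2 * v))) (Ioi 0) := by
    have h := integrable_mul_exp_neg_mul_sq (b := (2 * (v : ℝ))⁻¹) (by positivity)
    refine (h.congr ?_).integrableOn
    filter_upwards with u
    rw [neg_div, div_eq_inv_mul, neg_mul]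
  have htend : Tendsto (fun u : ℝ => -(v : ℝ) * rexp (-u ^ 2 / (2 * v))) atTop (nhds 0) := by
    have h1 : Tendsto (fun u : ℝ => -u ^ 2 / (2 * (v : ℝ))) atTop atBot := by
      apply Tendsto.atBot_div_const (by positivity)
      simpa using (tendsto_pow_atTop (n := 2) (by norm_num)).neg
    have := (Real.tendsto_exp_atBot.comp h1).const_mul (-(v : ℝ))
    simpa using this
  have := integral_Ioi_of_hasDerivAt_of_tendsto' hderiv hint htend
  rw [this]
  simp

lemma integral_abs_mul_pdf_le (m : ℝ) (v : ℝ≥0) (hv : 0 < (v : ℝ)) :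
    ∫ z, |z - m| * gaussianPDFReal m v z ≤ Real.sqrt v := by
  have hshift : ∫ z, |z - m| * gaussianPDFReal m v z
      = ∫ u, |u| * gaussianPDFReal 0 v u := by
    rw [← integral_sub_right_eq_self (fun u : ℝ => |u| * gaussianPDFReal 0 v u) m]
    congr 1
    ext z
    rw [gaussianPDFReal_sub, zero_add]
  rw [hshift]
  have habs : ∫ u, |u| * gaussianPDFReal 0 v u
      = 2 * ∫ u in Ioi (0 : ℝ), u * gaussianPDFReal 0 v u := by
    rw [← integral_comp_abs (f := fun u => u * gaussianPDFReal 0 v u)]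
    congr 1
    ext u
    simp only [gaussianPDFReal, sub_zero, sq_abs]
  rw [habs]
  have hval : ∫ u in Ioi (0 : ℝ), u * gaussianPDFReal 0 v u
      = (Real.sqrt (2 * π * v))⁻¹ * v := by
    have e1 : (fun u : ℝ => u * gaussianPDFReal 0 v u)
        = fun u : ℝ => (Real.sqrt (2 * π * v))⁻¹ * (u * rexp (-u ^ 2 / (2 * v))) := by
      ext u
      simp only [gaussianPDFReal, sub_zero]
      ring
    rw [e1, MeasureTheory.integral_const_mul, integral_Ioi_mul_exp v hv]
  rw [hval]
  have hsv : 0 < Real.sqrt v := Real.sqrt_pos.mpr hv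
  have h2pi : 2 ≤ Real.sqrt (2 * π) := by
    nlinarith [Real.sq_sqrt (show (0:ℝ) ≤ 2 * π by positivity),
      Real.sqrt_nonneg (2 * π), Real.pi_gt_three]
  have hA : 2 * Real.sqrt v ≤ Real.sqrt (2 * π * v) := by
    rw [Real.sqrt_mul (by positivity)]
    exact mul_le_mul_of_nonneg_right h2pi (Real.sqrt_nonneg _)
  have hApos : 0 < 2 * Real.sqrt v := by positivity
  have hinv : (Real.sqrt (2 * π * v))⁻¹ ≤ (2 * Real.sqrt v)⁻¹ :=
    inv_anti₀ hApos hA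
  have hle : (Real.sqrt (2 * π * v))⁻¹ * v ≤ (2 * Real.sqrt v)⁻¹ * v :=
    mul_le_mul_of_nonneg_right hinv (le_of_lt hv)
  have heq : (2 * Real.sqrt v)⁻¹ * v = Real.sqrt v / 2 := by
    field_simp
    nlinarith [Real.sq_sqrt (le_of_lt hv)]
  rw [heq] at hle
  linarith

lemma integrable_gaussian_of_bound (m : ℝ) (v : ℝ≥0) (hv : 0 < (v : ℝ)) {f : ℝ → ℝ}
    (hf : AEStronglyMeasurable f (volume : Measure ℝ)) (a b : ℝ)
    (hb : ∀ z, |f z| ≤ a + b * |z - m|) :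
    Integrable f (gaussianReal m v) := by
  have hv' : v ≠ 0 := by
    intro hh
    rw [hh] at hv
    simp at hv
  rw [gaussianReal_of_var_ne_zero m hv',
    integrable_withDensity_iff (measurable_gaussianPDF m v)
      (ae_of_all _ fun z => ENNReal.ofReal_lt_top)]
  have htoReal : ∀ z, ((gaussianPDF m v z).toReal) = gaussianPDFReal m v z := fun z =>
    ENNReal.toReal_ofReal (gaussianPDFReal_nonneg m v z)
  simp only [htoReal]
  refine Integrable.mono'
    (((integrable_gaussianPDFReal m v).const_mul a).add
      ((integrable_abs_mul_pdf m v hv).const_mul b))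
    (hf.mul (measurable_gaussianPDFReal m v).aestronglyMeasurable) ?_
  filter_upwards with z
  have h0 : 0 ≤ gaussianPDFReal m v z := gaussianPDFReal_nonneg m v z
  have := mul_le_mul_of_nonneg_right (hb z) h0
  calc ‖f z * gaussianPDFReal m v z‖ = |f z| * gaussianPDFReal m v z := by
        rw [Real.norm_eq_abs, abs_mul, abs_of_nonneg h0]
    _ ≤ (a + b * |z - m|) * gaussianPDFReal m v z := this
    _ = a * gaussianPDFReal m v z + b * (|z - m| * gaussianPDFReal m v z) := by ring

lemma ae_hasDerivAt (h : ℝ → ℝ) (hLip : LipschitzWith 1 h) {t : ℝ} (ht : 0 < t) (m : ℝ) :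
    ∀ᵐ y ∂(gaussianReal 0 1),
      HasDerivAt h (deriv h (Real.sqrt t * y + m)) (Real.sqrt t * y + m) := by
  have h1 : ∀ᵐ z ∂(volume : Measure ℝ), HasDerivAt h (deriv h z) z :=
    hLip.ae_differentiableAt.mono fun z hz => hz.hasDerivAt
  have hv : (⟨t, ht.le⟩ : ℝ≥0) ≠ 0 := by
    intro hh
    exact ht.ne' (congrArg NNReal.toReal hh)
  have h2 : ∀ᵐ z ∂(gaussianReal m ⟨t, ht.le⟩), HasDerivAt h (deriv h z) z :=
    h1.filter_mono (gaussianReal_absolutelyContinuous m hv).ae_le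
  rw [← gaussian_map ht m] at h2
  exact ae_of_ae_map ((measurable_id.const_mul _).add_const _).aemeasurable h2

end SmoothingAux
open SmoothingAux

/-- The Gaussian smoothing h_t of a 1-Lipschitz function is twice differentiable
with second derivative bounded by 1/√t. -/
theorem smoothing_second_derivative_bound
    (h : ℝ → ℝ) (hLip : LipschitzWith 1 h)
    (t : ℝ) (ht : 0 < t) (ht' : t < 1) :
    (∀ x : ℝ, DifferentiableAt ℝ
        (fun x => ∫ y, h (Real.sqrt t * y + Real.sqrt (1 - t) * x)
          ∂(gaussianReal 0 1)) x) ∧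
    (∀ x : ℝ, DifferentiableAt ℝ
        (deriv (fun x => ∫ y, h (Real.sqrt t * y + Real.sqrt (1 - t) * x)
          ∂(gaussianReal 0 1))) x) ∧
    (∀ x : ℝ,
        |deriv (deriv (fun x => ∫ y, h (Real.sqrt t * y + Real.sqrt (1 - t) * x)
          ∂(gaussianReal 0 1))) x| ≤ 1 / Real.sqrt t) := by
  have h1t : 0 < 1 - t := sub_pos.mpr ht'
  set c : ℝ := Real.sqrt (1 - t) with hc_def
  have hc : 0 < c := Real.sqrt_pos.mpr h1t
  have hc2 : c ^ 2 = 1 - t := Real.sq_sqrt h1t.le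
  have hc1 : c ≤ 1 := by nlinarith [hc.le]
  have hst : 0 < Real.sqrt t := Real.sqrt_pos.mpr ht
  set tNN : ℝ≥0 := ⟨t, ht.le⟩ with htNN_def
  set g : ℝ → ℝ := deriv h with hg_def
  have hg_meas : Measurable g := measurable_deriv h
  have hg_le : ∀ z, |g z| ≤ 1 := by
    intro z
    by_cases hd : DifferentiableAt ℝ h z
    · have h1 : ‖fderiv ℝ h z‖ ≤ ((1 : ℝ≥0) : ℝ) := norm_fderiv_le_of_lipschitz ℝ hLip
      calc |g z| = ‖(fderiv ℝ h z) 1‖ := by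
            rw [hg_def, fderiv_apply_one_eq_deriv]
            rfl
        _ ≤ ‖fderiv ℝ h z‖ * ‖(1 : ℝ)‖ := (fderiv ℝ h z).le_opNorm 1
        _ ≤ 1 := by simpa using h1
    · simp [hg_def, deriv_zero_of_not_differentiableAt hd]
  set G : ℝ → ℝ := fun x => ∫ z, gaussianPDFReal (c * x) tNN z * g z with hG_def
  -- Step A : first derivative
  have keyA : ∀ x₀ : ℝ, HasDerivAt
      (fun x => ∫ y, h (Real.sqrt t * y + c * x) ∂(gaussianReal 0 1)) (c * G x₀) x₀ := by
    intro x₀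
    have main := hasDerivAt_integral_of_dominated_loc_of_lip (μ := gaussianReal 0 1)
      (s := Metric.ball x₀ 1) (x₀ := x₀) (Metric.ball_mem_nhds x₀ one_pos)
      (F := fun x y => h (Real.sqrt t * y + c * x))
      (F' := fun y => c * g (Real.sqrt t * y + c * x₀))
      (bound := fun _ => c)
      (Eventually.of_forall fun x =>
        (hLip.continuous.comp (by continuity)).aestronglyMeasurable)
      ?_ ?_ ?_ (integrable_const c) ?_
    · have heq : (∫ y, c * g (Real.sqrt t * y + c * x₀) ∂(gaussianReal 0 1)) = c * G x₀ := by
        rw [MeasureTheory.integral_const_mul, integral_comp_gaussian ht (c * x₀) hg_meas]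
      rw [heq] at main
      exact main.2
    · -- integrability of F x₀
      refine integrable_gaussian_of_bound 0 1 (by norm_num)
        (hLip.continuous.comp (by continuity)).aestronglyMeasurable
        (|h 0| + c * |x₀|) (Real.sqrt t) ?_
      intro y
      have hd := hLip.dist_le_mul (Real.sqrt t * y + c * x₀) 0
      rw [NNReal.coe_one, one_mul, Real.dist_eq, Real.dist_eq, sub_zero] at hd
      have h2 : |Real.sqrt t * y + c * x₀| ≤ Real.sqrt t * |y| + c * |x₀| := by
        refine (abs_add_le _ _).trans ?_
        rw [abs_mul, abs_mul, abs_of_nonneg hst.le, abs_of_nonneg hc.le]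
      have h3 : |h (Real.sqrt t * y + c * x₀)|
          ≤ |h (Real.sqrt t * y + c * x₀) - h 0| + |h 0| := by
        calc |h (Real.sqrt t * y + c * x₀)|
            = |(h (Real.sqrt t * y + c * x₀) - h 0) + h 0| := by ring_nf
          _ ≤ |h (Real.sqrt t * y + c * x₀) - h 0| + |h 0| := abs_add_le _ _
      rw [sub_zero]
      linarith
    · exact ((hg_meas.comp ((measurable_id.const_mul _).add_const _)).const_mul
        c).aestronglyMeasurable
    · refine ae_of_all _ fun y => ?_
      have laff : LipschitzWith (Real.nnabs c) (fun x : ℝ => Real.sqrt t * y + c * x) := by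
        refine LipschitzWith.of_dist_le_mul fun a b => ?_
        rw [Real.dist_eq, Real.dist_eq, Real.coe_nnabs]
        refine le_of_eq ?_
        rw [show Real.sqrt t * y + c * a - (Real.sqrt t * y + c * b) = c * (a - b) by ring,
          abs_mul]
      have hcomp := hLip.comp laff
      rw [one_mul] at hcomp
      exact hcomp.lipschitzOnWith (s := Metric.ball x₀ 1)
    · filter_upwards [ae_hasDerivAt h hLip ht (c * x₀)] with y hy
      have haff : HasDerivAt (fun x : ℝ => Real.sqrt t * y + c * x) c x₀ := by
        simpa using ((hasDerivAt_id x₀).const_mul c).const_add (Real.sqrt t * y)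
      have hcomp := hy.comp x₀ haff
      exact hcomp.congr_deriv (by ring)
  -- Step B : second derivative
  have keyB : ∀ x₀ : ℝ, HasDerivAt G
      (∫ z, c * (z - c * x₀) / t * gaussianPDFReal (c * x₀) tNN z * g z) x₀ := by
    intro x₀
    have htv : 0 < ((tNN : ℝ≥0) : ℝ) := ht
    have main := hasDerivAt_integral_of_dominated_loc_of_lip (μ := (volume : Measure ℝ))
      (s := Metric.ball x₀ 1) (x₀ := x₀) (Metric.ball_mem_nhds x₀ one_pos)
      (F := fun x z => gaussianPDFReal (c * x) tNN z * g z)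
      (F' := fun z => c * (z - c * x₀) / t * gaussianPDFReal (c * x₀) tNN z * g z)
      (bound := fun z => c / t * (|z - c * x₀| + 1) *
        ((Real.sqrt (2 * π * t))⁻¹ * rexp (1 / t) * rexp (-(z - c * x₀) ^ 2 / (4 * t))))
      (Eventually.of_forall fun x =>
        ((measurable_gaussianPDFReal _ _).mul hg_meas).aestronglyMeasurable)
      ?_ ?_ ?_ ?_ ?_
    · exact main.2
    · refine (integrable_gaussianPDFReal (c * x₀) tNN).mono'
        (((measurable_gaussianPDFReal _ _).mul hg_meas).aestronglyMeasurable) ?_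
      filter_upwards with z
      rw [Real.norm_eq_abs, abs_mul, abs_of_nonneg (gaussianPDFReal_nonneg _ _ _)]
      exact mul_le_of_le_one_right (gaussianPDFReal_nonneg _ _ _) (hg_le z)
    · exact ((((measurable_id.sub_const (c * x₀)).const_mul c).div_const t).mul
        (measurable_gaussianPDFReal _ _)).mul hg_meas |>.aestronglyMeasurable
    · -- Lipschitz bound on the ball
      refine ae_of_all _ fun z => ?_
      refine Convex.lipschitzOnWith_of_nnnorm_deriv_le (fun x _ =>
        ((hasDerivAt_pdf tNN htv c z x).mul_const (g z)).differentiableAt)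
        (fun x hx => ?_) (convex_ball x₀ 1)
      have hder : deriv (fun x => gaussianPDFReal (c * x) tNN z * g z) x
          = c * (z - c * x) / ((tNN : ℝ≥0) : ℝ) * gaussianPDFReal (c * x) tNN z * g z :=
        ((hasDerivAt_pdf tNN htv c z x).mul_const (g z)).deriv
      rw [← NNReal.coe_le_coe, coe_nnnorm, Real.coe_nnabs, hder, Real.norm_eq_abs]
      beta_reduce
      simp only [show ((tNN : ℝ≥0) : ℝ) = t from rfl]
      have hxball : |x - x₀| < 1 := by
        simpa [Real.dist_eq] using Metric.mem_ball.mp hx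
      have hd1 : |c * (x - x₀)| ≤ 1 := by
        rw [abs_mul, abs_of_nonneg hc.le]
        nlinarith [abs_nonneg (x - x₀)]
      have hd2 : (c * (x - x₀)) ^ 2 ≤ 1 := by
        nlinarith [sq_abs (c * (x - x₀)), abs_nonneg (c * (x - x₀))]
      have hpdf_eq : ∀ m' : ℝ, gaussianPDFReal m' tNN z
          = (Real.sqrt (2 * π * t))⁻¹ * rexp (-(z - m') ^ 2 / (2 * t)) := fun m' => rfl
      have harg : -(z - c * x) ^ 2 / (2 * t) ≤ 1 / t + -(z - c * x₀) ^ 2 / (4 * t) := by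
        have key : (z - c * x₀) ^ 2 / 2 - (z - c * x) ^ 2 ≤ 2 := by
          nlinarith [sq_nonneg ((z - c * x₀) - 2 * (c * (x - x₀))), hd2,
            sq_nonneg (c * (x - x₀))]
        have heq2 : (1 / t + -(z - c * x₀) ^ 2 / (4 * t)) - (-(z - c * x) ^ 2 / (2 * t))
            = (2 - ((z - c * x₀) ^ 2 / 2 - (z - c * x) ^ 2)) / (2 * t) := by
          field_simp
          ring
        rw [← sub_nonneg, heq2]
        exact div_nonneg (by linarith) (by linarith)
      have hpdf_le : gaussianPDFReal (c * x) tNN z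
          ≤ (Real.sqrt (2 * π * t))⁻¹ * rexp (1 / t) * rexp (-(z - c * x₀) ^ 2 / (4 * t)) := by
        calc gaussianPDFReal (c * x) tNN z
            = (Real.sqrt (2 * π * t))⁻¹ * rexp (-(z - c * x) ^ 2 / (2 * t)) := hpdf_eq _
          _ ≤ (Real.sqrt (2 * π * t))⁻¹
              * (rexp (1 / t) * rexp (-(z - c * x₀) ^ 2 / (4 * t))) := by
              rw [← Real.exp_add]
              exact mul_le_mul_of_nonneg_left (Real.exp_le_exp.mpr harg) (by positivity)
          _ = (Real.sqrt (2 * π * t))⁻¹ * rexp (1 / t)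
              * rexp (-(z - c * x₀) ^ 2 / (4 * t)) := by ring
      have h3 : |z - c * x| ≤ |z - c * x₀| + 1 := by
        have he : z - c * x = (z - c * x₀) + (-(c * (x - x₀))) := by ring
        rw [he]
        refine (abs_add_le _ _).trans ?_
        rw [abs_neg]
        linarith
      have habs : |c * (z - c * x) / t * gaussianPDFReal (c * x) tNN z * g z|
          = c * |z - c * x| / t * gaussianPDFReal (c * x) tNN z * |g z| := by
        rw [abs_mul, abs_mul, abs_div, abs_mul, abs_of_nonneg hc.le,
          abs_of_nonneg (gaussianPDFReal_nonneg _ _ _), abs_of_nonneg ht.le]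
      have hbz : 0 ≤ c / t * (|z - c * x₀| + 1) *
          ((Real.sqrt (2 * π * t))⁻¹ * rexp (1 / t) * rexp (-(z - c * x₀) ^ 2 / (4 * t))) :=
        mul_nonneg (mul_nonneg (div_nonneg hc.le ht.le) (by positivity)) (by positivity)
      rw [habs, abs_of_nonneg hbz]
      calc c * |z - c * x| / t * gaussianPDFReal (c * x) tNN z * |g z|
          ≤ c * (|z - c * x₀| + 1) / t *
            ((Real.sqrt (2 * π * t))⁻¹ * rexp (1 / t) * rexp (-(z - c * x₀) ^ 2 / (4 * t)))
            * 1 := by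
            gcongr
            · exact gaussianPDFReal_nonneg _ _ _
            · exact hg_le z
        _ = c / t * (|z - c * x₀| + 1) *
            ((Real.sqrt (2 * π * t))⁻¹ * rexp (1 / t) * rexp (-(z - c * x₀) ^ 2 / (4 * t))) := by
            ring
    · -- integrability of the bound
      have e1 : Integrable (fun u : ℝ => |u| * rexp (-(4 * t)⁻¹ * u ^ 2)) := by
        have hh := (integrable_mul_exp_neg_mul_sq (b := (4 * t)⁻¹) (by positivity)).abs
        refine hh.congr ?_
        filter_upwards with u
        rw [abs_mul, abs_of_nonneg (exp_pos _).le]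
      have e2 := integrable_exp_neg_mul_sq (b := (4 * t)⁻¹) (by positivity)
      have ib0 : Integrable (fun u : ℝ => (|u| + 1) * rexp (-(4 * t)⁻¹ * u ^ 2)) := by
        refine (e1.add e2).congr ?_
        filter_upwards with u
        simp only [Pi.add_apply]
        ring
      refine ((ib0.comp_sub_right (c * x₀)).const_mul
        (c / t * ((Real.sqrt (2 * π * t))⁻¹ * rexp (1 / t)))).congr ?_
      filter_upwards with z
      rw [show -(z - c * x₀) ^ 2 / (4 * t) = -(4 * t)⁻¹ * (z - c * x₀) ^ 2 by ring]
      ring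
    · refine ae_of_all _ fun z => ?_
      exact (hasDerivAt_pdf tNN htv c z x₀).mul_const (g z)
  -- conclusions
  have hderiv1 : deriv (fun x => ∫ y, h (Real.sqrt t * y + c * x) ∂(gaussianReal 0 1))
      = fun x => c * G x := funext fun x => (keyA x).deriv
  refine ⟨fun x => (keyA x).differentiableAt, ?_, ?_⟩
  · intro x
    rw [hderiv1]
    exact ((keyB x).const_mul c).differentiableAt
  · intro x
    rw [hderiv1, ((keyB x).const_mul c).deriv]
    -- final bound
    set D : ℝ := ∫ z, c * (z - c * x) / t * gaussianPDFReal (c * x) tNN z * g z with hD_def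
    have hDle : |D| ≤ c / t * Real.sqrt t := by
      have habs : |D| ≤ ∫ z, |c * (z - c * x) / t * gaussianPDFReal (c * x) tNN z * g z| := by
        rw [hD_def, ← Real.norm_eq_abs]
        refine (norm_integral_le_integral_norm _).trans_eq ?_
        simp only [Real.norm_eq_abs]
      have hmono : ∫ z, |c * (z - c * x) / t * gaussianPDFReal (c * x) tNN z * g z|
          ≤ ∫ z, c / t * (|z - c * x| * gaussianPDFReal (c * x) tNN z) := by
        refine integral_mono_of_nonneg (ae_of_all _ fun z => abs_nonneg _)
          ((integrable_abs_mul_pdf (c * x) tNN ht).const_mul (c / t)) (ae_of_all _ fun z => ?_)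
        beta_reduce
        rw [abs_mul, abs_mul, abs_div, abs_mul, abs_of_nonneg hc.le,
          abs_of_nonneg (gaussianPDFReal_nonneg _ _ _)]
        have h0 : 0 ≤ c * |z - c * x| / |t| * gaussianPDFReal (c * x) tNN z :=
          mul_nonneg (div_nonneg (mul_nonneg hc.le (abs_nonneg _)) (abs_nonneg _))
            (gaussianPDFReal_nonneg _ _ _)
        calc c * |z - c * x| / |t| * gaussianPDFReal (c * x) tNN z * |g z|
            ≤ c * |z - c * x| / |t| * gaussianPDFReal (c * x) tNN z * 1 :=
              mul_le_mul_of_nonneg_left (hg_le z) h0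
          _ = c / t * (|z - c * x| * gaussianPDFReal (c * x) tNN z) := by
              rw [abs_of_nonneg ht.le]
              ring
      have hint : ∫ z, c / t * (|z - c * x| * gaussianPDFReal (c * x) tNN z)
          ≤ c / t * Real.sqrt t := by
        rw [MeasureTheory.integral_const_mul]
        exact mul_le_mul_of_nonneg_left (integral_abs_mul_pdf_le (c * x) tNN ht)
          (by positivity)
      linarith
    have hs2 : Real.sqrt t * Real.sqrt t = t := Real.mul_self_sqrt ht.le
    have hfin : c * (c / t * Real.sqrt t) ≤ 1 / Real.sqrt t := by
      have e1 : c * (c / t * Real.sqrt t) = c ^ 2 / Real.sqrt t := by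
        rw [eq_div_iff hst.ne']
        have e2 : c / t * Real.sqrt t * Real.sqrt t = c := by
          rw [mul_assoc, hs2]
          field_simp
        calc c * (c / t * Real.sqrt t) * Real.sqrt t
            = c * (c / t * Real.sqrt t * Real.sqrt t) := by ring
          _ = c * c := by rw [e2]
          _ = c ^ 2 := by ring
      rw [e1, div_le_div_iff_of_pos_right hst]
      nlinarith
    calc |c * D| = c * |D| := by rw [abs_mul, abs_of_nonneg hc.le]
      _ ≤ c * (c / t * Real.sqrt t) := mul_le_mul_of_nonneg_left hDle hc.le
      _ ≤ 1 / Real.sqrt t := hfin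
end

section
/- Let X and Y be two sequences of independent centered random variables with unit variance, let d, N ≥ 1, and let f : [N]^d → ℝ be symmetric and vanish on diagonals. Fix k ≥ 2 and suppose that for every i, X_i and Y_i have finite k-th moments and E[X_i^l] = E[Y_i^l] for all l = 2,...,k. Then the homogeneous sums Q(X) = Σ_{i_1,...,i_d} f(i_1,...,i_d) X_{i_1}···X_{i_d} and Q(Y) (defined analogously) satisfy E[Q(X)^l] = E[Q(Y)^l] for all l = 2,...,k. -/
open MeasureTheory ProbabilityTheory Finset

open ENNReal

lemma aux_integrable_pow {Ω : Type*} [MeasurableSpace Ω] {P : Measure Ω}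
    [IsProbabilityMeasure P] {X : Ω → ℝ} {k : ℕ} (hX : MemLp X k P) {a : ℕ} (ha : a ≤ k) :
    Integrable (fun ω => X ω ^ a) P := by
  rcases Nat.eq_zero_or_pos a with rfl | hapos
  · simpa using integrable_const (1 : ℝ)
  have h1 : MemLp X a P := hX.mono_exponent (by exact_mod_cast ha)
  have h2 : Integrable (fun ω => ‖X ω‖ ^ ((a : ℝ≥0∞).toReal)) P :=
    h1.integrable_norm_rpow (by exact_mod_cast hapos.ne') (by simp)
  have h3 : Integrable (fun ω => |X ω| ^ a) P := by
    have : ((a : ℝ≥0∞).toReal) = (a : ℝ) := by simp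
    simpa [this, Real.rpow_natCast, Real.norm_eq_abs] using h2
  refine h3.mono' ?_ ?_
  · exact (hX.aestronglyMeasurable.aemeasurable.pow_const a).aestronglyMeasurable
  · filter_upwards with ω
    simp [abs_pow, Real.norm_eq_abs]

lemma aux_integral_prod {Ω : Type*} [MeasurableSpace Ω] {P : Measure Ω}
    [IsProbabilityMeasure P] {ι : Type*} [DecidableEq ι] {Z : ι → Ω → ℝ}
    (hindep : iIndepFun Z P) (hmeas : ∀ i, Measurable (Z i))
    (hint : ∀ i, Integrable (Z i) P) (s : Finset ι) :
    Integrable (fun ω => ∏ i ∈ s, Z i ω) P ∧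
      ∫ ω, ∏ i ∈ s, Z i ω ∂P = ∏ i ∈ s, ∫ ω, Z i ω ∂P := by
  classical
  induction s using Finset.induction_on with
  | empty => simp
  | insert i s hi ih =>
    have hIndep : IndepFun (∏ j ∈ s, Z j) (Z i) P :=
      hindep.indepFun_finsetProd_of_notMem hmeas hi
    have hprod_eq : (∏ j ∈ s, Z j) = fun ω => ∏ j ∈ s, Z j ω := by
      funext ω; simp [Finset.prod_apply]
    have hint_prod : Integrable (∏ j ∈ s, Z j) P := by rw [hprod_eq]; exact ih.1
    have hmul : Integrable ((∏ j ∈ s, Z j) * Z i) P :=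
      hIndep.integrable_mul hint_prod (hint i)
    constructor
    · have : ((∏ j ∈ s, Z j) * Z i) = fun ω => ∏ j ∈ insert i s, Z j ω := by
        funext ω
        simp [Finset.prod_insert hi, Finset.prod_apply, mul_comm]
      rwa [this] at hmul
    · have h1 : ∫ ω, ∏ j ∈ insert i s, Z j ω ∂P
          = ∫ ω, ((∏ j ∈ s, Z j) * Z i) ω ∂P := by
        congr 1; funext ω
        simp [Finset.prod_insert hi, Finset.prod_apply, mul_comm]
      rw [h1, hIndep.integral_mul_eq_mul_integral hint_prod.aestronglyMeasurable
        (hint i).aestronglyMeasurable,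
        Finset.prod_insert hi, hprod_eq, ih.2, mul_comm]

lemma aux_integral_prod_pow {Ω : Type*} [MeasurableSpace Ω] {P : Measure Ω}
    [IsProbabilityMeasure P] {N : ℕ} {X : Fin N → Ω → ℝ} {k : ℕ}
    (hindep : iIndepFun X P) (hmeas : ∀ i, Measurable (X i))
    (hLk : ∀ i, MemLp (X i) k P) (a : Fin N → ℕ) (ha : ∀ i, a i ≤ k) :
    Integrable (fun ω => ∏ i, X i ω ^ a i) P ∧
      ∫ ω, ∏ i, X i ω ^ a i ∂P = ∏ i, ∫ ω, X i ω ^ a i ∂P :=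
  aux_integral_prod
    (hindep.comp (fun i x => x ^ a i) (fun _ => measurable_id.pow_const _))
    (fun i => (hmeas i).pow_const _)
    (fun i => aux_integrable_pow (hLk i) (ha i)) univ

/-- Moment matching transfers from the individual variables to homogeneous sums:
if X_i and Y_i have matching moments up to order k, the homogeneous sums based
on X and Y have matching moments up to order k. -/
theorem homogeneous_sum_moment_matching
    {Ω : Type*} [MeasurableSpace Ω] (P : Measure Ω) [IsProbabilityMeasure P]
    (d N : ℕ) (hd : 1 ≤ d) (hN : 1 ≤ N)
    (f : (Fin d → Fin N) → ℝ)
    (hsymm : ∀ (σ : Equiv.Perm (Fin d)) (j : Fin d → Fin N), f (j ∘ σ) = f j)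
    (hdiag : ∀ j : Fin d → Fin N, ¬ Function.Injective j → f j = 0)
    (X Y : Fin N → Ω → ℝ)
    (hmeasX : ∀ i, Measurable (X i)) (hmeasY : ∀ i, Measurable (Y i))
    (hindepX : iIndepFun X P)
    (hindepY : iIndepFun Y P)
    (hcentX : ∀ i, ∫ ω, X i ω ∂P = 0) (hcentY : ∀ i, ∫ ω, Y i ω ∂P = 0)
    (hvarX : ∀ i, ∫ ω, (X i ω) ^ 2 ∂P = 1) (hvarY : ∀ i, ∫ ω, (Y i ω) ^ 2 ∂P = 1)
    (k : ℕ) (hk : 2 ≤ k)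
    (hLkX : ∀ i, MemLp (X i) k P) (hLkY : ∀ i, MemLp (Y i) k P)
    (hmom : ∀ i, ∀ l, 2 ≤ l → l ≤ k → ∫ ω, X i ω ^ l ∂P = ∫ ω, Y i ω ^ l ∂P) :
    ∀ l, 2 ≤ l → l ≤ k →
      ∫ ω, (∑ j : Fin d → Fin N, f j * ∏ m, X (j m) ω) ^ l ∂P
        = ∫ ω, (∑ j : Fin d → Fin N, f j * ∏ m, Y (j m) ω) ^ l ∂P := by
  intro l hl2 hlk
  classical
  -- multiplicity of index i in the tuple J
  set cnt : (Fin l → Fin d → Fin N) → Fin N → ℕ := fun J i =>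
    (univ.filter (fun p : Fin l × Fin d => J p.1 p.2 = i)).card with hcnt_def
  -- bound on multiplicities when all components are injective
  have hcnt_le : ∀ J : Fin l → Fin d → Fin N, (∀ t, Function.Injective (J t)) →
      ∀ i, cnt J i ≤ k := by
    intro J hJ i
    have h1 : (univ.filter (fun p : Fin l × Fin d => J p.1 p.2 = i)).card
        ≤ (univ : Finset (Fin l)).card := by
      apply Finset.card_le_card_of_injOn (fun p => p.1) (fun p _ => mem_univ _)
      intro p hp q hq hpq
      simp only [coe_filter, Set.mem_setOf_eq, mem_univ, true_and] at hp hq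
      have h2 : J p.1 p.2 = J p.1 q.2 := by
        rw [hp, show p.1 = q.1 from hpq, hq]
      exact Prod.ext hpq (hJ p.1 h2)
    simpa [hcnt_def] using h1.trans (by simpa using hlk)
  -- key formula, valid for any sequence with the right properties
  have key : ∀ Z : Fin N → Ω → ℝ,
      ∀ (hmeas : ∀ i, Measurable (Z i))
        (hindep : iIndepFun Z P)
        (hLk : ∀ i, MemLp (Z i) k P),
      ∫ ω, (∑ j : Fin d → Fin N, f j * ∏ m, Z (j m) ω) ^ l ∂P
        = ∑ J : Fin l → Fin d → Fin N,
            (∏ t, f (J t)) * ∏ i, ∫ ω, Z i ω ^ cnt J i ∂P := by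
    intro Z hmeas hindep hLk
    have hpt : ∀ ω, (∑ j : Fin d → Fin N, f j * ∏ m, Z (j m) ω) ^ l
        = ∑ J : Fin l → Fin d → Fin N, (∏ t, f (J t)) * ∏ i, Z i ω ^ cnt J i := by
      intro ω
      rw [Fintype.sum_pow]
      refine Finset.sum_congr rfl fun J _ => ?_
      rw [Finset.prod_mul_distrib]
      congr 1
      have h1 : (∏ t, ∏ m, Z (J t m) ω) = ∏ p : Fin l × Fin d, Z (J p.1 p.2) ω :=
        (Fintype.prod_prod_type (fun p : Fin l × Fin d => Z (J p.1 p.2) ω)).symm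
      rw [h1, ← Finset.prod_fiberwise_of_maps_to
        (g := fun p : Fin l × Fin d => J p.1 p.2)
        (fun (p : Fin l × Fin d) _ => mem_univ (J p.1 p.2))
        (fun p : Fin l × Fin d => Z (J p.1 p.2) ω)]
      refine Finset.prod_congr rfl fun i _ => ?_
      calc (∏ p ∈ univ.filter (fun p : Fin l × Fin d => J p.1 p.2 = i), Z (J p.1 p.2) ω)
          = ∏ _p ∈ univ.filter (fun p : Fin l × Fin d => J p.1 p.2 = i), Z i ω :=
            Finset.prod_congr rfl (fun p hp => by rw [(Finset.mem_filter.1 hp).2])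
        _ = Z i ω ^ cnt J i := by rw [Finset.prod_const]
    have hinj_of_ne : ∀ J : Fin l → Fin d → Fin N, (∏ t, f (J t)) ≠ 0 →
        ∀ t, Function.Injective (J t) := by
      intro J hC t
      by_contra hni
      exact hC (Finset.prod_eq_zero (mem_univ t) (hdiag _ hni))
    have hintJ : ∀ J ∈ (univ : Finset (Fin l → Fin d → Fin N)),
        Integrable (fun ω => (∏ t, f (J t)) * ∏ i, Z i ω ^ cnt J i) P := by
      intro J _
      by_cases hC : (∏ t, f (J t)) = 0
      · simp only [hC, zero_mul]; exact integrable_const 0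
      · exact ((aux_integral_prod_pow hindep hmeas hLk (cnt J)
          (hcnt_le J (hinj_of_ne J hC))).1).const_mul _
    calc ∫ ω, (∑ j : Fin d → Fin N, f j * ∏ m, Z (j m) ω) ^ l ∂P
        = ∫ ω, ∑ J : Fin l → Fin d → Fin N,
            (∏ t, f (J t)) * ∏ i, Z i ω ^ cnt J i ∂P := by simp only [hpt]
      _ = ∑ J : Fin l → Fin d → Fin N,
            ∫ ω, (∏ t, f (J t)) * ∏ i, Z i ω ^ cnt J i ∂P := integral_finset_sum _ hintJ
      _ = ∑ J : Fin l → Fin d → Fin N,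
            (∏ t, f (J t)) * ∏ i, ∫ ω, Z i ω ^ cnt J i ∂P := by
          refine Finset.sum_congr rfl fun J _ => ?_
          rw [integral_const_mul]
          by_cases hC : (∏ t, f (J t)) = 0
          · simp [hC]
          · rw [(aux_integral_prod_pow hindep hmeas hLk (cnt J)
              (hcnt_le J (hinj_of_ne J hC))).2]
  rw [key X hmeasX hindepX hLkX, key Y hmeasY hindepY hLkY]
  refine Finset.sum_congr rfl fun J _ => ?_
  by_cases hC : (∏ t, f (J t)) = 0
  · simp [hC]
  · have hinj : ∀ t, Function.Injective (J t) := by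
      intro t
      by_contra hni
      exact hC (Finset.prod_eq_zero (mem_univ t) (hdiag _ hni))
    congr 1
    refine Finset.prod_congr rfl fun i _ => ?_
    rcases Nat.lt_or_ge (cnt J i) 2 with h | h
    · rcases hv : cnt J i with _ | a
      · simp
      · rcases a with _ | a
        · simp [hcentX i, hcentY i]
        · rw [hv] at h; omega
    · exact hmom i _ h (hcnt_le J hinj i)
end
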